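/- arXiv:2106.13803 — 3 statements merged into one kernel-verified Lean document; each statement's English description precedes it below -/
import Mathlib

section
/- Let n be a positive integer, d ≥ 1 a real, ε ∈ (0,1), and λ ≤ ε/(2 log n). Then every graph G on n vertices with average degree at least d contains a subgraph which is a (d', λ, ε)-expander for some d' ≥ d/2. -/
/-- The average degree of a finite graph: `2 e(G) / v(G)`. -/
noncomputable def avgDeg {V : Type*} [Fintype V] (G : SimpleGraph V) : ℝ :=
  2 * G.edgeSet.ncard / Fintype.card V

/-- The average degree of a subgraph: `2 e(H) / v(H)`. -/
noncomputable def subAvg {V : Type*} {G : SimpleGraph V} (H : G.Subgraph) : ℝ :=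
  2 * H.edgeSet.ncard / H.verts.ncard

/-- A subgraph `H` of `G` is `d`-minimal. -/
def SubIsMinimal {V : Type*} {G : SimpleGraph V} (H : G.Subgraph) (d : ℝ) : Prop :=
  d ≤ subAvg H ∧ ∀ H' : G.Subgraph, H' < H → subAvg H' < d

/-- Average degree induced on `S ⊆ H.verts` in a subgraph `H`. -/
noncomputable def subIndAvg {V : Type*} {G : SimpleGraph V} (H : G.Subgraph) (S : Set V) : ℝ :=
  2 * ({e ∈ H.edgeSet | ∀ v ∈ e, v ∈ S} : Set (Sym2 V)).ncard / S.ncard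

/-- A subgraph `H` of `G` is a `(d, λ, ε)`-expander: `H` is `d`-minimal and every
`S ⊆ V(H)` with `|S| ≤ (1 - ε) v(H)` induces average degree at most `(1 - λ) d`. -/
def SubIsExpander {V : Type*} {G : SimpleGraph V} (H : G.Subgraph) (d lam eps : ℝ) : Prop :=
  SubIsMinimal H d ∧ ∀ S : Set V, S ⊆ H.verts →
    (S.ncard : ℝ) ≤ (1 - eps) * H.verts.ncard → subIndAvg H S ≤ (1 - lam) * d

/-!
Repeatedly pass to a minimal subgraph of average degree at least the current target `c`. If it
is not a `(c, λ, ε)`-expander, some set of at most a `(1 - ε)`-fraction of its vertices induces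
average degree above `(1 - λ) c`; restart there with target `(1 - λ) c`. After `j` rounds at
least one vertex is left among at most `(1 - ε)ʲ n`, so `j ε ≤ log n`, and Bernoulli's
inequality gives `(1 - λ)ʲ ≥ 1 - j λ ≥ 1/2`.
-/

namespace SimpleGraph.Subgraph

variable {V : Type*} {G : SimpleGraph V}

lemma edgeSet_induce (H : G.Subgraph) (S : Set V) :
    (H.induce S).edgeSet = {e ∈ H.edgeSet | ∀ v ∈ e, v ∈ S} := by
  ext e
  induction e using Sym2.ind with
  | _ a b =>
    simp only [Subgraph.mem_edgeSet, induce_adj, Set.mem_ofPred_eq, Sym2.mem_iff, forall_eq_or_imp,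
      forall_eq]
    tauto

lemma subAvg_induce (H : G.Subgraph) (S : Set V) : subAvg (H.induce S) = subIndAvg H S := by
  rw [subAvg, subIndAvg, edgeSet_induce, induce_verts]

lemma subAvg_top [Fintype V] : subAvg (⊤ : G.Subgraph) = avgDeg G := by
  rw [subAvg, avgDeg, edgeSet_top, verts_top, Set.ncard_univ, Nat.card_eq_fintype_card]

lemma one_le_ncard_verts_of_subAvg_pos {H : G.Subgraph} (h : 0 < subAvg H) :
    (1 : ℝ) ≤ H.verts.ncard := by
  by_contra! hH
  have : H.verts.ncard = 0 := by exact_mod_cast Nat.lt_one_iff.mp (by exact_mod_cast hH)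
  simp [subAvg, this] at h

lemma exists_subIsMinimal_le [Finite V] {K : G.Subgraph} {c : ℝ} (hK : c ≤ subAvg K) :
    ∃ H ≤ K, SubIsMinimal H c := by
  obtain ⟨H, hHK, hmin⟩ := exists_minimal_le_of_wellFoundedLT (fun H => c ≤ subAvg H) K hK
  exact ⟨H, hHK, hmin.prop, fun H' hlt => lt_of_not_ge fun h' => hlt.not_ge (hmin.le_of_le h' hlt.le)⟩

variable [Finite V] {lam eps : ℝ}

theorem exists_subIsExpander_le (heps : 0 < eps) (hlam : lam < 1) (K : G.Subgraph) {c : ℝ}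
    (hc : 0 < c) (hK : c ≤ subAvg K) :
    ∃ H ≤ K, ∃ j : ℕ, 1 ≤ (1 - eps) ^ j * K.verts.ncard ∧
      SubIsExpander H ((1 - lam) ^ j * c) lam eps := by
  obtain ⟨H, hHK, hHmin⟩ := exists_subIsMinimal_le hK
  have hK1 := one_le_ncard_verts_of_subAvg_pos (hc.trans_le hK)
  by_cases hexp : SubIsExpander H c lam eps
  · exact ⟨H, hHK, 0, by simpa using hK1, by simpa using hexp⟩
  obtain ⟨S, hSH, hScard, hSavg⟩ : ∃ S ⊆ H.verts,
      (S.ncard : ℝ) ≤ (1 - eps) * H.verts.ncard ∧ (1 - lam) * c < subAvg (H.induce S) := by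
    simpa [SubIsExpander, hHmin, subAvg_induce] using hexp
  have hc' : 0 < (1 - lam) * c := mul_pos (by linarith) hc
  have hS1 : (1 : ℝ) ≤ S.ncard := one_le_ncard_verts_of_subAvg_pos (hc'.trans hSavg)
  have hHK_card : (H.verts.ncard : ℝ) ≤ K.verts.ncard := by
    exact_mod_cast Set.ncard_le_ncard hHK.1 (Set.toFinite _)
  have hshrink : 0 < 1 - eps := pos_of_mul_pos_left (by linarith) (Nat.cast_nonneg _)
  have hSK_card : (S.ncard : ℝ) ≤ (1 - eps) * K.verts.ncard :=
    hScard.trans (by gcongr)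
  have hdecr : S.ncard < K.verts.ncard := by
    have : (S.ncard : ℝ) < K.verts.ncard := by nlinarith
    exact_mod_cast this
  obtain ⟨H', hH'S, j, hj, hH'⟩ := exists_subIsExpander_le heps hlam (H.induce S) hc' hSavg.le
  have hSH_le : H.induce S ≤ H := (induce_mono_right hSH).trans_eq induce_self_verts
  refine ⟨H', hH'S.trans (hSH_le.trans hHK), j + 1, ?_, by rwa [pow_succ, mul_assoc]⟩
  calc (1 : ℝ) ≤ (1 - eps) ^ j * S.ncard := hj
    _ ≤ (1 - eps) ^ j * ((1 - eps) * K.verts.ncard) := by gcongr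
    _ = (1 - eps) ^ (j + 1) * K.verts.ncard := by ring
termination_by K.verts.ncard

end SimpleGraph.Subgraph

lemma nat_mul_le_log_of_one_le_one_sub_pow_mul {eps x : ℝ} {j : ℕ} (heps : eps ≤ 1)
    (h : 1 ≤ (1 - eps) ^ j * x) : j * eps ≤ Real.log x := by
  have hpow : (1 - eps) ^ j ≤ Real.exp (-(j * eps)) := by
    rw [neg_mul_eq_mul_neg, Real.exp_nat_mul]
    exact pow_le_pow_left₀ (by linarith) (Real.one_sub_le_exp_neg eps) j
  have hx : 0 < x := pos_of_mul_pos_right (by linarith) (pow_nonneg (by linarith) j)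
  rw [Real.le_log_iff_exp_le hx]
  calc Real.exp (j * eps) ≤ Real.exp (j * eps) * ((1 - eps) ^ j * x) :=
        le_mul_of_one_le_right (Real.exp_pos _).le h
    _ ≤ Real.exp (j * eps) * (Real.exp (-(j * eps)) * x) := by gcongr
    _ = x := by rw [← mul_assoc, ← Real.exp_add, add_neg_cancel, Real.exp_zero, one_mul]

lemma lt_one_of_mul_two_log_le {lam eps : ℝ} {n : ℕ} (hlog : 0 < Real.log n) (heps : eps ≤ 1)
    (h : lam * (2 * Real.log n) ≤ eps) : lam < 1 := by
  have hn : (2 : ℝ) ≤ n := by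
    have : 1 < n := by exact_mod_cast (Real.log_pos_iff (Nat.cast_nonneg n)).mp hlog
    exact_mod_cast this
  have := Real.log_le_log two_pos hn
  have := Real.log_two_gt_d9
  nlinarith

theorem stmt3_general {V : Type*} [Fintype V] (G : SimpleGraph V) (d eps lam : ℝ)
    (hd : 1 ≤ d) (heps : eps ∈ Set.Ioo (0 : ℝ) 1)
    (hlam : 0 < lam) (hlam2 : lam ≤ eps / (2 * Real.log (Fintype.card V)))
    (hG : d ≤ avgDeg G) :
    ∃ (H : G.Subgraph) (d' : ℝ), d / 2 ≤ d' ∧ SubIsExpander H d' lam eps := by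
  obtain ⟨heps0, heps1⟩ := heps
  set n := Fintype.card V
  have hlog : 0 < Real.log n := by
    by_contra! h
    have : eps / (2 * Real.log n) ≤ 0 := div_nonpos_of_nonneg_of_nonpos heps0.le (by linarith)
    linarith
  have hkey : lam * (2 * Real.log n) ≤ eps := (le_div_iff₀ (by positivity)).mp hlam2
  have hlam1 : lam < 1 := lt_one_of_mul_two_log_le hlog heps1.le hkey
  obtain ⟨H, -, j, hj, hH⟩ := SimpleGraph.Subgraph.exists_subIsExpander_le heps0 hlam1
    (⊤ : G.Subgraph) (c := d) (by linarith) (by rwa [SimpleGraph.Subgraph.subAvg_top])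
  refine ⟨H, _, ?_, hH⟩
  have hjn : j * eps ≤ Real.log n := nat_mul_le_log_of_one_le_one_sub_pow_mul heps1.le
    (by simpa [Set.ncard_univ, n] using hj)
  have hjlam : j * lam ≤ 1 / 2 := by nlinarith
  have hbern : 1 - j * lam ≤ (1 - lam) ^ j := by
    simpa [sub_eq_add_neg] using one_add_mul_le_pow (a := -lam) (by linarith) j
  calc d / 2 ≤ (1 - j * lam) * d := by nlinarith
    _ ≤ (1 - lam) ^ j * d := by gcongr

/-- Every `n`-vertex graph with average degree at least `d ≥ 1` contains a
`(d', λ, ε)`-expander with `d' ≥ d/2`, provided `λ ≤ ε / (2 log n)`. -/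
theorem stmt3 {V : Type*} [Fintype V] (G : SimpleGraph V) (d eps lam : ℝ)
    (hn : 1 ≤ Fintype.card V) (hd : 1 ≤ d) (heps : eps ∈ Set.Ioo (0 : ℝ) 1)
    (hlam : 0 < lam) (hlam2 : lam ≤ eps / (2 * Real.log (Fintype.card V)))
    (hG : d ≤ avgDeg G) :
    ∃ (H : G.Subgraph) (d' : ℝ), d / 2 ≤ d' ∧ SubIsExpander H d' lam eps :=
  stmt3_general G d eps lam hd heps hlam hlam2 hG
end

section
/- Let n be a positive integer, d ≥ 1 a real, ε ∈ (0,1), and λ ≤ ε/(2 log n). Then every graph G on n vertices with average degree d contains edge-disjoint subgraphs G_1, …, G_k such that each G_i is a (d(G_i), λ, ε)-expander with d(G_i) ≥ εd/2, and the union of the G_i contains at least (1 − ε)e(G) edges. -/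
open SimpleGraph
set_option linter.unusedSectionVars false

section Aux
variable {V : Type*} [Fintype V] {G : SimpleGraph V}

private lemma finSub : Finite G.Subgraph := by
  apply Finite.of_injective (fun H : G.Subgraph => (H.verts, H.Adj))
  intro a b h
  exact SimpleGraph.Subgraph.ext (congrArg Prod.fst h) (congrArg Prod.snd h)

private lemma subAvg_nonneg (H : G.Subgraph) : 0 ≤ subAvg H := by
  unfold subAvg; positivity

private lemma verts_nonempty_of_pos {H : G.Subgraph} (h : 0 < subAvg H) :
    H.verts.Nonempty := by
  rw [Set.nonempty_iff_ne_empty]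
  intro hc
  rw [subAvg, hc] at h
  simp at h

private lemma edges_nonempty_of_pos {H : G.Subgraph} (h : 0 < subAvg H) :
    H.edgeSet.Nonempty := by
  rw [Set.nonempty_iff_ne_empty]
  intro hc
  rw [subAvg, hc] at h
  simp at h

private lemma exists_min (H₀ : G.Subgraph) (c : ℝ) (h : c ≤ subAvg H₀) :
    ∃ K, K ≤ H₀ ∧ c ≤ subAvg K ∧ ∀ K', K' < K → subAvg K' < c := by
  have : Finite G.Subgraph := finSub
  have hwf : WellFoundedLT G.Subgraph := Finite.to_wellFoundedLT
  obtain ⟨K, hKs, hmin⟩ := wellFounded_lt.has_min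
    {K : G.Subgraph | K ≤ H₀ ∧ c ≤ subAvg K} ⟨H₀, le_refl _, h⟩
  refine ⟨K, hKs.1, hKs.2, fun K' hK' => ?_⟩
  by_contra hc
  push_neg at hc
  exact hmin K' ⟨hK'.le.trans hKs.1, hc⟩ hK'

private lemma induce_edgeSet (H : G.Subgraph) (S : Set V) :
    (H.induce S).edgeSet = {e ∈ H.edgeSet | ∀ v ∈ e, v ∈ S} := by
  ext e
  induction e with
  | _ a b =>
    simp only [Subgraph.mem_edgeSet, Subgraph.induce_adj, Set.mem_setOf_eq, Sym2.mem_iff]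
    constructor
    · rintro ⟨ha, hb, h⟩; exact ⟨h, by rintro v (rfl|rfl) <;> assumption⟩
    · rintro ⟨h, hv⟩; exact ⟨hv a (Or.inl rfl), hv b (Or.inr rfl), h⟩

private lemma induce_le (H : G.Subgraph) (S : Set V) (h : S ⊆ H.verts) : H.induce S ≤ H := by
  constructor
  · simpa using h
  · intro a b hab; simp only [Subgraph.induce_adj] at hab; exact hab.2.2

private lemma subAvg_induce (H : G.Subgraph) (S : Set V) :
    subAvg (H.induce S) = subIndAvg H S := by
  rw [subAvg, subIndAvg, induce_edgeSet]
  rfl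
private lemma deleteEdges_edgeSet (H : G.Subgraph) (s : Set (Sym2 V)) :
    (H.deleteEdges s).edgeSet = H.edgeSet \ s := by
  ext e
  induction e with
  | _ a b => simp [Subgraph.mem_edgeSet, Subgraph.deleteEdges_adj, and_comm]

end Aux

private lemma extract {V : Type*} [Fintype V] {G : SimpleGraph V} {eps lam : ℝ}
    (he0 : 0 < eps) (he1 : eps < 1) (hlam0 : 0 < lam) (hlam1 : lam < 1) :
    ∀ n' : ℕ, ∀ (H₀ : G.Subgraph) (c : ℝ), 0 < c → c ≤ subAvg H₀ →
      H₀.verts.ncard ≤ n' →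
      ∃ H, H ≤ H₀ ∧ SubIsExpander H (subAvg H) lam eps ∧
        (1 - lam * Real.log n' / (-Real.log (1 - eps))) * c ≤ subAvg H := by
  have hL : 0 < -Real.log (1 - eps) := by
    have := Real.log_neg (show (0:ℝ) < 1 - eps by linarith) (by linarith)
    linarith
  intro n'
  induction n' using Nat.strong_induction_on with
  | _ n' ih =>
    intro H₀ c hc hcH hn'
    have hH₀pos : 0 < subAvg H₀ := lt_of_lt_of_le hc hcH
    have hvne : H₀.verts.Nonempty := verts_nonempty_of_pos hH₀pos
    have hn'1 : 1 ≤ n' := le_trans ((Set.ncard_pos (Set.toFinite _)).mpr hvne) hn'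
    have hn'R : (1 : ℝ) ≤ (n' : ℝ) := by exact_mod_cast hn'1
    have hlogn' : 0 ≤ Real.log n' := Real.log_nonneg hn'R
    obtain ⟨K, hKH₀, hcK, hKmin⟩ := exists_min H₀ c hcH
    have hKpos : 0 < subAvg K := lt_of_lt_of_le hc hcK
    by_cases hexp : ∀ S : Set V, S ⊆ K.verts →
        (S.ncard : ℝ) ≤ (1 - eps) * K.verts.ncard → subIndAvg K S ≤ (1 - lam) * subAvg K
    · refine ⟨K, hKH₀, ⟨⟨le_refl _, fun H' h => lt_of_lt_of_le (hKmin H' h) hcK⟩, hexp⟩, ?_⟩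
      have h0 : 0 ≤ lam * Real.log n' / (-Real.log (1 - eps)) := by positivity
      nlinarith
    · push_neg at hexp
      obtain ⟨S, hS1, hS2, hS3⟩ := hexp
      have hindpos : 0 < subIndAvg K S := by nlinarith
      rw [← subAvg_induce] at hS3 hindpos
      have hSne : S.Nonempty := by
        have := verts_nonempty_of_pos hindpos
        simpa using this
      have hS0 : 0 < S.ncard := (Set.ncard_pos (Set.toFinite _)).mpr hSne
      have hS0R : (1 : ℝ) ≤ (S.ncard : ℝ) := by exact_mod_cast hS0
      have hKvn' : (K.verts.ncard : ℝ) ≤ (n' : ℝ) := by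
        exact_mod_cast le_trans (Set.ncard_le_ncard hKH₀.1 (Set.toFinite _)) hn'
      have hKv' : (1 - eps) * (K.verts.ncard : ℝ) ≤ (1 - eps) * (n' : ℝ) :=
        mul_le_mul_of_nonneg_left hKvn' (by linarith)
      have hSlt : S.ncard < n' := by
        have h1 : (S.ncard : ℝ) < (n' : ℝ) := by nlinarith
        exact_mod_cast h1
      have hrec := ih S.ncard hSlt (K.induce S) ((1 - lam) * c)
        (mul_pos (by linarith) hc)
        (le_trans (mul_le_mul_of_nonneg_left hcK (by linarith)) hS3.le)
        (by simp)
      obtain ⟨H, hHle, hHexp, hHdeg⟩ := hrec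
      refine ⟨H, le_trans hHle (le_trans (induce_le K S hS1) hKH₀), hHexp, ?_⟩
      have hkey : Real.log S.ncard + (-Real.log (1 - eps)) ≤ Real.log n' := by
        have hlog1 : Real.log S.ncard ≤ Real.log ((1 - eps) * n') := by
          rw [Real.log_le_log_iff (by linarith) (by nlinarith)]
          linarith
        rw [Real.log_mul (by linarith) (by linarith)] at hlog1
        linarith
      set L := -Real.log (1 - eps) with hLdef
      set a := Real.log S.ncard / L with hadef
      set b := Real.log n' / L with hbdef
      rw [mul_div_assoc, ← hadef] at hHdeg
      have hab : a + 1 ≤ b := by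
        have h1 : (Real.log S.ncard + L) / L ≤ Real.log n' / L := by gcongr
        rw [add_div, div_self hL.ne'] at h1
        exact h1
      have ha0 : 0 ≤ a := by
        have : 0 ≤ Real.log S.ncard := Real.log_nonneg hS0R
        positivity
      have hf : 1 - lam * b ≤ (1 - lam * a) * (1 - lam) := by
        nlinarith [mul_le_mul_of_nonneg_left hab hlam0.le,
          mul_nonneg (mul_nonneg hlam0.le hlam0.le) ha0]
      have h2 := mul_le_mul_of_nonneg_right hf hc.le
      rw [mul_assoc] at h2
      rw [mul_div_assoc, ← hbdef]
      linarith

/-- Every `n`-vertex graph with average degree `d` contains edge-disjoint subgraphs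
`G₁, …, G_k`, each a `(d(Gᵢ), λ, ε)`-expander with `d(Gᵢ) ≥ ε d / 2`, whose union
covers at least `(1 - ε) e(G)` edges, provided `λ ≤ ε / (2 log n)`. -/
theorem stmt4 {V : Type*} [Fintype V] (G : SimpleGraph V) (d eps lam : ℝ)
    (hn : 1 ≤ Fintype.card V) (hd : 1 ≤ d) (heps : eps ∈ Set.Ioo (0 : ℝ) 1)
    (hlam : 0 < lam) (hlam2 : lam ≤ eps / (2 * Real.log (Fintype.card V)))
    (hG : avgDeg G = d) :
    ∃ (k : ℕ) (Gs : Fin k → G.Subgraph),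
      (∀ i j, i ≠ j → Disjoint (Gs i).edgeSet (Gs j).edgeSet) ∧
      (∀ i, SubIsExpander (Gs i) (subAvg (Gs i)) lam eps ∧ eps * d / 2 ≤ subAvg (Gs i)) ∧
      (1 - eps) * G.edgeSet.ncard ≤ ((⋃ i, (Gs i).edgeSet).ncard : ℝ) := by
  classical
  obtain ⟨he0, he1⟩ := heps
  have hn0 : (0 : ℝ) < (Fintype.card V : ℝ) := by exact_mod_cast hn
  have hn2 : 2 ≤ Fintype.card V := by
    by_contra h
    have h1 : Fintype.card V ≤ 1 := by omega
    have he : G.edgeSet = ∅ := by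
      ext e
      induction e with
      | _ a b =>
        simp only [SimpleGraph.mem_edgeSet, Set.mem_empty_iff_false, iff_false]
        intro hab
        exact hab.ne (Fintype.card_le_one_iff.mp h1 a b)
    rw [avgDeg, he] at hG
    simp at hG
    linarith
  have hlog2 : (0.6931471803 : ℝ) < Real.log 2 := Real.log_two_gt_d9
  have hlogn : Real.log 2 ≤ Real.log (Fintype.card V) :=
    (Real.log_le_log_iff (by norm_num) hn0).mpr (by exact_mod_cast hn2)
  have hlogpos : 0 < Real.log (Fintype.card V) := by linarith
  have hlam1 : lam < 1 :=
    lt_of_le_of_lt hlam2 ((div_lt_one (by positivity)).mpr (by linarith))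
  have hlamlog : lam * Real.log (Fintype.card V) ≤ eps / 2 := by
    have h1 := mul_le_mul_of_nonneg_right hlam2 hlogpos.le
    have h2 : eps / (2 * Real.log (Fintype.card V)) * Real.log (Fintype.card V) = eps / 2 := by
      field_simp
    linarith [h2 ▸ h1]
  have hL : 0 < -Real.log (1 - eps) := by
    have := Real.log_neg (show (0 : ℝ) < 1 - eps by linarith) (by linarith)
    linarith
  have hepsL : eps ≤ -Real.log (1 - eps) := by
    have := Real.log_le_sub_one_of_pos (show (0 : ℝ) < 1 - eps by linarith)
    linarith
  have hhalf : (1 : ℝ) / 2 ≤ 1 - lam * Real.log (Fintype.card V) / (-Real.log (1 - eps)) := by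
    have s1 : lam * Real.log (Fintype.card V) / (-Real.log (1 - eps)) ≤
        (eps / 2) / (-Real.log (1 - eps)) := by gcongr
    have s2 : (eps / 2) / (-Real.log (1 - eps)) ≤ (eps / 2) / eps := by gcongr
    have s3 : (eps / 2) / eps = 1 / 2 := by
      field_simp
    linarith
  have he2 : 2 * (G.edgeSet.ncard : ℝ) = d * Fintype.card V := by
    rw [avgDeg, div_eq_iff hn0.ne'] at hG
    exact hG
  have hepsd : 0 < eps * d := mul_pos he0 (by linarith)
  have hdec : ∀ m : ℕ, ∀ R : G.Subgraph, R.verts = Set.univ → R.edgeSet.ncard ≤ m →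
      ∃ (k : ℕ) (Gs : Fin k → G.Subgraph),
        (∀ i j, i ≠ j → Disjoint (Gs i).edgeSet (Gs j).edgeSet) ∧
        (∀ i, (SubIsExpander (Gs i) (subAvg (Gs i)) lam eps ∧ eps * d / 2 ≤ subAvg (Gs i))
            ∧ (Gs i).edgeSet ⊆ R.edgeSet) ∧
        ((R.edgeSet.ncard : ℝ) ≤ eps * G.edgeSet.ncard + ((⋃ i, (Gs i).edgeSet).ncard : ℝ)) := by
    intro m
    induction m using Nat.strong_induction_on with
    | _ m ih =>
      intro R hRv hRm
      by_cases hcase : (R.edgeSet.ncard : ℝ) ≤ eps * G.edgeSet.ncard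
      · refine ⟨0, Fin.elim0, fun i => i.elim0, fun i => i.elim0, ?_⟩
        simpa using hcase
      · push_neg at hcase
        have hRn : R.verts.ncard = Fintype.card V := by
          rw [hRv, Set.ncard_univ, Nat.card_eq_fintype_card]
        have hsub : eps * d ≤ subAvg R := by
          rw [subAvg, hRn, le_div_iff₀ hn0]
          have h4 : eps * (2 * (G.edgeSet.ncard : ℝ)) = eps * (d * Fintype.card V) := by
            rw [he2]
          linarith
        obtain ⟨H, hHR, hHexp, hHdeg⟩ := extract he0 he1 hlam hlam1 (Fintype.card V) R
          (eps * d) hepsd hsub (le_of_eq hRn)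
        have hHdeg2 : eps * d / 2 ≤ subAvg H := by
          have := mul_le_mul_of_nonneg_right hhalf hepsd.le
          linarith
        have hHpos : 0 < subAvg H := lt_of_lt_of_le (by positivity) hHdeg2
        have hHe : H.edgeSet.Nonempty := edges_nonempty_of_pos hHpos
        have hHsub : H.edgeSet ⊆ R.edgeSet := SimpleGraph.Subgraph.edgeSet_mono hHR
        set R' := R.deleteEdges H.edgeSet with hR'def
        have hR'e : R'.edgeSet = R.edgeSet \ H.edgeSet := deleteEdges_edgeSet R H.edgeSet
        have hsplit : R.edgeSet.ncard = H.edgeSet.ncard + R'.edgeSet.ncard := by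
          rw [hR'e, ← Set.ncard_union_eq Set.disjoint_sdiff_right (Set.toFinite _)
            (Set.toFinite _), Set.union_diff_cancel hHsub]
        have hH1 : 1 ≤ H.edgeSet.ncard := (Set.ncard_pos (Set.toFinite _)).mpr hHe
        have hlt : R'.edgeSet.ncard < m := by omega
        obtain ⟨k, Gs, hdisj, hexp, hbound⟩ := ih _ hlt R' hRv le_rfl
        have hdisjH : ∀ j, Disjoint H.edgeSet (Gs j).edgeSet := by
          intro j
          have h1 : (Gs j).edgeSet ⊆ R.edgeSet \ H.edgeSet := hR'e ▸ (hexp j).2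
          exact Set.disjoint_sdiff_right.mono_right h1
        refine ⟨k + 1, Fin.cons H Gs, ?_, ?_, ?_⟩
        · intro i j
          refine Fin.cases ?_ ?_ i
          · refine Fin.cases ?_ ?_ j
            · intro h; exact absurd rfl h
            · intro j' _
              simpa using hdisjH j'
          · intro i'
            refine Fin.cases ?_ ?_ j
            · intro _
              simpa using (hdisjH i').symm
            · intro j' hne
              have hne' : i' ≠ j' := fun h => hne (by rw [h])
              simpa using hdisj i' j' hne'
        · intro i
          refine Fin.cases ?_ ?_ i
          · simp only [Fin.cons_zero]
            exact ⟨⟨hHexp, hHdeg2⟩, hHsub⟩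
          · intro j
            simp only [Fin.cons_succ]
            exact ⟨(hexp j).1, ((hexp j).2).trans (by rw [hR'e]; exact Set.diff_subset)⟩
        · have hU : (⋃ i, ((Fin.cons H Gs : Fin (k+1) → G.Subgraph) i).edgeSet) =
              H.edgeSet ∪ ⋃ j, (Gs j).edgeSet := by
            ext e
            simp only [Set.mem_iUnion, Set.mem_union, Fin.exists_fin_succ, Fin.cons_zero,
              Fin.cons_succ]
          rw [hU, Set.ncard_union_eq (Set.disjoint_iUnion_right.mpr hdisjH) (Set.toFinite _)
            (Set.toFinite _)]
          have hcast : (R.edgeSet.ncard : ℝ) = H.edgeSet.ncard + R'.edgeSet.ncard := by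
            exact_mod_cast hsplit
          push_cast
          linarith
  obtain ⟨k, Gs, h1, h2, h3⟩ := hdec (G.edgeSet.ncard) ⊤ SimpleGraph.Subgraph.verts_top
    (by rw [SimpleGraph.Subgraph.edgeSet_top])
  refine ⟨k, Gs, h1, fun i => (h2 i).1, ?_⟩
  rw [SimpleGraph.Subgraph.edgeSet_top] at h3
  linarith
end

section
/- Properly colour the m-dimensional hypercube Q_m as follows: vertices are subsets of {1, …, m}, and for each S ⊆ {1, …, m} and i ∈ S there is an edge between S and S \ {i} of colour i. Then this is a proper edge colouring and Q_m contains no rainbow cycle. -/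
/-!
Crossing an edge of colour `i` toggles the membership of `i`, so along a walk from `X` to `Y`
the symmetric difference of the colour singletons is `X ∆ Y`. On a closed walk this is `∅`,
whereas for pairwise distinct colours it is the (nonempty) set of colours used.
-/

open scoped symmDiff

lemma Finset.eq_singleton_of_card_eq_one_of_mem {α : Type*} {s : Finset α} {a : α}
    (hs : s.card = 1) (ha : a ∈ s) : s = {a} := by
  obtain ⟨b, rfl⟩ := Finset.card_eq_one.1 hs
  rw [Finset.mem_singleton.1 ha]

lemma List.foldr_symmDiff_singleton_of_nodup {α : Type*} [DecidableEq α] {l : List α}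
    (hl : l.Nodup) : l.foldr (fun i s => {i} ∆ s) (∅ : Finset α) = l.toFinset := by
  induction l with
  | nil => rfl
  | cons a l ih =>
    obtain ⟨ha, hl⟩ := List.nodup_cons.1 hl
    have hdisj : _root_.Disjoint ({a} : Finset α) l.toFinset := by simpa using ha
    rw [List.foldr_cons, ih hl, hdisj.symmDiff_eq_sup, List.toFinset_cons, Finset.insert_eq]
    rfl

section ColouredByFlips

variable {α : Type*} [DecidableEq α] {G : SimpleGraph (Finset α)} {c : Sym2 (Finset α) → α}

lemma SimpleGraph.eq_mk_symmDiff_of_mem_edgeSet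
    (hc : ∀ A B, G.Adj A B → A ∆ B = {c s(A, B)})
    {e : Sym2 (Finset α)} (he : e ∈ G.edgeSet) {v : Finset α} (hv : v ∈ e) :
    e = s(v, v ∆ {c e}) := by
  induction e using Sym2.ind with
  | _ x y =>
    rcases Sym2.mem_iff.1 hv with rfl | rfl
    · rw [← hc v y he, symmDiff_symmDiff_cancel_left]
    · rw [Sym2.eq_swap, ← hc v x (G.adj_symm he), symmDiff_symmDiff_cancel_left]

lemma SimpleGraph.Walk.foldr_symmDiff_colours
    (hc : ∀ A B, G.Adj A B → A ∆ B = {c s(A, B)}) {X Y : Finset α} (w : G.Walk X Y) :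
    (w.edges.map c).foldr (fun i s => {i} ∆ s) ∅ = X ∆ Y := by
  induction w with
  | nil => simp
  | cons h w ih =>
    rw [SimpleGraph.Walk.edges_cons, List.map_cons, List.foldr_cons, ih, ← hc _ _ h,
      symmDiff_assoc, symmDiff_symmDiff_cancel_left]

lemma SimpleGraph.Walk.IsCycle.not_nodup_map_edges
    (hc : ∀ A B, G.Adj A B → A ∆ B = {c s(A, B)}) {A : Finset α} {p : G.Walk A A}
    (hp : p.IsCycle) : ¬ (p.edges.map c).Nodup := by
  intro hnodup
  have hfold := p.foldr_symmDiff_colours hc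
  rw [symmDiff_self, List.foldr_symmDiff_singleton_of_nodup hnodup, Finset.bot_eq_empty,
    List.toFinset_eq_empty_iff, List.map_eq_nil_iff, ← List.length_eq_zero_iff,
    SimpleGraph.Walk.length_edges] at hfold
  have := hp.three_le_length
  omega

end ColouredByFlips

/-- The proper colouring of the `m`-dimensional hypercube: vertices are subsets of
`{1, …, m}`, and the edge between `S` and `S \ {i}` (for `i ∈ S`) gets colour `i`, i.e.
the colour of an edge is the unique coordinate in which its endpoints differ. This is a
proper edge colouring, and the hypercube contains no rainbow cycle. -/
theorem stmt12 (m : ℕ) (Q : SimpleGraph (Finset (Fin m)))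
    (hQ : ∀ A B : Finset (Fin m), Q.Adj A B ↔ (symmDiff A B).card = 1)
    (c : Sym2 (Finset (Fin m)) → Fin m)
    (hc : ∀ A B : Finset (Fin m), Q.Adj A B → c s(A, B) ∈ symmDiff A B) :
    (∀ e₁ ∈ Q.edgeSet, ∀ e₂ ∈ Q.edgeSet, e₁ ≠ e₂ →
      (∃ v, v ∈ e₁ ∧ v ∈ e₂) → c e₁ ≠ c e₂) ∧
    (∀ (A : Finset (Fin m)) (p : Q.Walk A A), p.IsCycle → ¬ (p.edges.map c).Nodup) := by
  have hflip : ∀ A B, Q.Adj A B → A ∆ B = {c s(A, B)} := fun A B h =>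
    Finset.eq_singleton_of_card_eq_one_of_mem ((hQ A B).1 h) (hc A B h)
  refine ⟨?_, fun A p hp => hp.not_nodup_map_edges hflip⟩
  rintro e₁ he₁ e₂ he₂ hne ⟨v, hv₁, hv₂⟩ hcolour
  apply hne
  rw [Q.eq_mk_symmDiff_of_mem_edgeSet hflip he₁ hv₁,
    Q.eq_mk_symmDiff_of_mem_edgeSet hflip he₂ hv₂, hcolour]
end
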